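/- arXiv:2407.13611 — 4 statements merged into one kernel-verified Lean document; each statement's English description precedes it below -/
import Mathlib

section
/- Let Δ and Δ° be dual reflexive polytopes with central triangulations T of Δ and T° of Δ°. The map sending (τ,σ) to (σ̂, τ_∞) is an isomorphism of posets from 𝒫^∞(T°,T) to 𝒫^∞(T,T°), where 𝒫^∞ consists of pairs (τ,σ) with τ containing 0 and τ ≠ 0 and σ a boundary simplex with σ ⊂ min(C(τ))^∨, ordered by reverse inclusion in both coordinates. -/
/-!
The map is an involution up to swapping the roles of `T` and `T°`: `σ ↦ σ̂` adds the
origin to a boundary simplex and `τ ↦ τ_∞` removes it again, while the incidence condition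
`⟨w, x⟩ = 1` is symmetric in the two lattices. Adding or removing the origin preserves
inclusions, since `0` lies in every `τ` and in no `σ`.
-/

/-- The standard pairing between the lattice `M = ℤ^d` and its dual `N = ℤ^d`. -/
def latPair {d : ℕ} (w x : Fin d → ℤ) : ℤ := ∑ i, w i * x i

/-- Combinatorial model of a unimodular central triangulation of a reflexive polytope:
simplices are recorded by their vertex sets (finite sets of lattice points); the
triangulation contains the vertex `0` (the origin, unique interior lattice point), is
closed under passing to nonempty faces, and the join of `0` with any simplex not
containing `0` (i.e. any boundary simplex) is again a simplex. -/
structure CentralTriang (d : ℕ) where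
  simp : Finset (Finset (Fin d → ℤ))
  nonempty_mem : ∀ s ∈ simp, s.Nonempty
  zero_mem : ({0} : Finset (Fin d → ℤ)) ∈ simp
  down : ∀ s ∈ simp, ∀ t ⊆ s, t.Nonempty → t ∈ simp
  join : ∀ s ∈ simp, 0 ∉ s → insert 0 s ∈ simp

/-- The poset `𝒫^∞(T', T)`: pairs `(τ, σ)` with `τ ∈ T'` containing `0`, `τ ≠ 0` (i.e.
`τ ≠ {0}`), `σ` a boundary simplex of `T` (i.e. `0 ∉ σ`), and `σ ⊆ min(C(τ))^∨`; by
reflexivity the latter incidence condition says exactly that every vertex of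
`τ_∞ = τ \ {0}` pairs to `1` with every vertex of `σ`. -/
def PinfCond {d : ℕ} (T' T : CentralTriang d)
    (p : Finset (Fin d → ℤ) × Finset (Fin d → ℤ)) : Prop :=
  p.1 ∈ T'.simp ∧ 0 ∈ p.1 ∧ p.1 ≠ {0} ∧ p.2 ∈ T.simp ∧ 0 ∉ p.2 ∧
    ∀ w ∈ p.1.erase 0, ∀ x ∈ p.2, latPair w x = 1

lemma latPair_comm {d : ℕ} (w x : Fin d → ℤ) : latPair w x = latPair x w := by
  simp only [latPair, mul_comm]

lemma Finset.erase_subset_erase_iff {α : Type*} [DecidableEq α] {a : α} {s t : Finset α}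
    (ha : a ∈ t) : s.erase a ⊆ t.erase a ↔ s ⊆ t := by
  conv_rhs => rw [← Finset.insert_erase ha]
  exact Finset.subset_insert_iff.symm

lemma Finset.insert_ne_singleton {α : Type*} [DecidableEq α] {a : α} {s : Finset α}
    (hs : s.Nonempty) (ha : a ∉ s) : insert a s ≠ {a} := by
  obtain ⟨x, hx⟩ := hs
  intro h
  have hxa : x = a := Finset.mem_singleton.mp (h ▸ Finset.mem_insert_of_mem hx)
  exact ha (hxa ▸ hx)

lemma CentralTriang.erase_zero_mem {d : ℕ} (T : CentralTriang d) {s : Finset (Fin d → ℤ)}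
    (hs : s ∈ T.simp) (h0 : 0 ∈ s) (hs0 : s ≠ {0}) : s.erase 0 ∈ T.simp :=
  T.down s hs _ (Finset.erase_subset 0 s)
    ((Finset.erase_nonempty h0).mpr ((Finset.nontrivial_iff_ne_singleton h0).mpr hs0))

/-- The map `(τ, σ) ↦ (σ̂, τ_∞)`. -/
def pinfDual {d : ℕ} (p : Finset (Fin d → ℤ) × Finset (Fin d → ℤ)) :
    Finset (Fin d → ℤ) × Finset (Fin d → ℤ) :=
  (insert 0 p.2, p.1.erase 0)

section PinfCond

variable {d : ℕ} {T' T : CentralTriang d} {p q : Finset (Fin d → ℤ) × Finset (Fin d → ℤ)}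

lemma pinfCond_pinfDual (h : PinfCond T' T p) : PinfCond T T' (pinfDual p) := by
  obtain ⟨hτ, hτ0, hτ_ne, hσ, hσ0, hpair⟩ := h
  refine ⟨T.join _ hσ hσ0, Finset.mem_insert_self _ _, Finset.insert_ne_singleton (T.nonempty_mem _ hσ) hσ0,
    T'.erase_zero_mem hτ hτ0 hτ_ne, Finset.notMem_erase _ _, ?_⟩
  intro x hx w hw
  simp only [pinfDual, Finset.erase_insert hσ0] at hx
  rw [latPair_comm]
  exact hpair w hw x hx

lemma pinfDual_pinfDual (h : PinfCond T' T p) : pinfDual (pinfDual p) = p :=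
  Prod.ext (Finset.insert_erase h.2.1) (Finset.erase_insert h.2.2.2.2.1)

lemma pinfDual_le_pinfDual_iff (hp : PinfCond T' T p) (hq : PinfCond T' T q) :
    pinfDual q ≤ pinfDual p ↔ q ≤ p := by
  simp only [pinfDual, Prod.mk_le_mk,
    Finset.insert_subset_insert_iff hq.2.2.2.2.1, Finset.erase_subset_erase_iff hp.2.1]
  exact and_comm

end PinfCond

def pinfEquiv {d : ℕ} (T' T : CentralTriang d) :
    {p // PinfCond T' T p} ≃ {p // PinfCond T T' p} where
  toFun p := ⟨pinfDual p.1, pinfCond_pinfDual p.2⟩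
  invFun p := ⟨pinfDual p.1, pinfCond_pinfDual p.2⟩
  left_inv p := Subtype.ext (pinfDual_pinfDual p.2)
  right_inv p := Subtype.ext (pinfDual_pinfDual p.2)

/-- The map `(τ, σ) ↦ (σ̂, τ_∞) = (conv(0, σ), τ ∩ ∂Δ°)` is an isomorphism
of posets `𝒫^∞(T°, T) → 𝒫^∞(T, T°)`, where both posets are ordered by reverse inclusion
in both coordinates. -/
theorem pinf_poset_iso {d : ℕ} (T' T : CentralTriang d) :
    ∃ e : {p // PinfCond T' T p} ≃ {p // PinfCond T T' p},
      (∀ p : {p // PinfCond T' T p},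
          (e p).1.1 = insert 0 p.1.2 ∧ (e p).1.2 = p.1.1.erase 0) ∧
      (∀ p q : {p // PinfCond T' T p},
          (q.1.1 ⊆ p.1.1 ∧ q.1.2 ⊆ p.1.2) ↔
          ((e q).1.1 ⊆ (e p).1.1 ∧ (e q).1.2 ⊆ (e p).1.2)) :=
  ⟨pinfEquiv T' T, fun _ => ⟨rfl, rfl⟩, fun p q => (pinfDual_le_pinfDual_iff p.2 q.2).symm⟩
end

section
/- Let Δ be a reflexive polytope with unimodular central triangulation T, with unique interior lattice point o, and let ε, ε' : (Δ ∩ M) → 𝔽₂ be sign distributions with ε(o) = ε'(o). Let D = Σ_{v : ε(v)=ε(o)} D_v and D' = Σ_{v : ε'(v)=ε'(o)} D_v be the associated toric 𝔽₂-divisors on ℂΣ_T. Then D and D' define the same class in Pic_{𝔽₂}(ℂΣ_T) if and only if there exists ξ ∈ Hom(M, 𝔽₂) such that ε'(v) = ε(v) + ξ(v - o) for all lattice points v of Δ. -/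
/-- A point of `ℝ^d` is a lattice point if all its coordinates are integers. -/
def IsLatticePoint {d : ℕ} (u : Fin d → ℝ) : Prop := ∀ i, ∃ z : ℤ, u i = z

/-- A lattice polytope is the convex hull of finitely many lattice points. -/
def IsLatticePolytope {d : ℕ} (S : Set (Fin d → ℝ)) : Prop :=
  ∃ F : Finset (Fin d → ℝ), (∀ v ∈ F, IsLatticePoint v) ∧ S = convexHull ℝ (F : Set (Fin d → ℝ))

/-- A set is a reflexive polytope if it is a lattice polytope cut out by inequalities
`⟨v, u⟩ ≤ 1` with `v` ranging over a finite set of lattice vectors. -/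
def IsReflexive {d : ℕ} (S : Set (Fin d → ℝ)) : Prop :=
  IsLatticePolytope S ∧ ∃ V : Finset (Fin d → ℝ), (∀ v ∈ V, IsLatticePoint v) ∧
    S = {u | ∀ v ∈ V, ∑ i, v i * u i ≤ 1}

/-!
Over `𝔽₂` the difference `D - D'` is `v ↦ ε v + ε' v`, and the image of `N ⊗ 𝔽₂` consists
exactly of the restrictions to `B` of the characters `ξ : M → 𝔽₂` (the vector `x` being the
character `v ↦ ∑ i, v i * x i`). So `D ~ D'` says `ε + ε' = ξ` on `B`; at the origin this holds
for every `ξ` because `ε o = ε' o`.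
-/

lemma ZMod.two_ite_eq_sub_ite_eq (a b c : ZMod 2) :
    ((if a = c then (1 : ZMod 2) else 0) - (if b = c then 1 else 0)) = a + b := by
  revert a b c; decide

lemma AddMonoidHom.apply_eq_sum_intCast_mul {n R : Type*} [Fintype n] [DecidableEq n] [Ring R]
    (ξ : (n → ℤ) →+ R) (v : n → ℤ) : ξ v = ∑ i, (v i : R) * ξ (Pi.single i 1) := by
  rw [← ξ.coe_toIntLinearMap, LinearMap.pi_apply_eq_sum_univ]
  simp only [AddMonoidHom.coe_toIntLinearMap, zsmul_eq_mul]
  congr! 3 with i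
  ext j
  rw [Pi.single_apply]
  exact if_congr eq_comm rfl rfl

lemma mem_range_mulVecLin_intCast_iff {ι n R : Type*} [Fintype n] [DecidableEq n] [CommRing R]
    (w : ι → n → ℤ) (f : ι → R) :
    f ∈ LinearMap.range (Matrix.mulVecLin (Matrix.of fun j i => (w j i : R))) ↔
      ∃ ξ : (n → ℤ) →+ R, ∀ j, f j = ξ (w j) := by
  simp only [LinearMap.mem_range, Matrix.mulVecLin_apply, funext_iff, Matrix.mulVec,
    dotProduct, Matrix.of_apply]
  constructor
  · rintro ⟨x, hx⟩
    refine ⟨AddMonoidHom.mk' (fun v => ∑ i, (v i : R) * x i) fun a b => ?_, fun j => (hx j).symm⟩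
    simp only [Pi.add_apply, Int.cast_add, add_mul, Finset.sum_add_distrib]
  · rintro ⟨ξ, hξ⟩
    exact ⟨fun i => ξ (Pi.single i 1), fun j => by rw [hξ, ξ.apply_eq_sum_intCast_mul]⟩

theorem divisor_classes_eq_iff_sign_translate_general {d : ℕ} (Δ : Set (Fin d → ℝ))
    (B : Finset (Fin d → ℤ))
    (hB : ∀ v : Fin d → ℤ, v ∈ B ↔ ((fun i => (v i : ℝ)) ∈ Δ ∧ v ≠ 0))
    (ε ε' : (Fin d → ℤ) → ZMod 2) (ho : ε 0 = ε' 0)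
    (D D' : ↥B → ZMod 2)
    (hD : ∀ v : ↥B, D v = if ε v.1 = ε 0 then 1 else 0)
    (hD' : ∀ v : ↥B, D' v = if ε' v.1 = ε' 0 then 1 else 0) :
    (D - D') ∈ LinearMap.range
        (Matrix.mulVecLin (Matrix.of fun (v : ↥B) (i : Fin d) => ((v.1 i : ZMod 2))))
      ↔ ∃ ξ : (Fin d → ℤ) →+ ZMod 2, ∀ v : Fin d → ℤ,
          (fun i => (v i : ℝ)) ∈ Δ → ε' v = ε v + ξ (v - 0) := by
  have hdiff : ∀ v : ↥B, (D - D') v = ε v.1 + ε' v.1 := fun v => by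
    rw [Pi.sub_apply, hD, hD', ← ho, ZMod.two_ite_eq_sub_ite_eq]
  have translate_iff (ξ : (Fin d → ℤ) →+ ZMod 2) (v : Fin d → ℤ) :
      ε v + ε' v = ξ v ↔ ε' v = ε v + ξ v := by
    rw [← sub_eq_iff_eq_add', CharTwo.sub_eq_add, add_comm (ε' v)]
  rw [mem_range_mulVecLin_intCast_iff (fun v : ↥B => v.1)]
  refine exists_congr fun ξ => ⟨fun h v hv => ?_, fun h v => ?_⟩
  · rw [sub_zero]
    by_cases hv0 : v = 0
    · rw [hv0, map_zero, add_zero, ho]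
    · rw [← translate_iff, ← hdiff ⟨v, (hB v).2 ⟨hv, hv0⟩⟩]
      exact h _
  · rw [hdiff, translate_iff]
    simpa using h v.1 ((hB v.1).1 v.2).1

/-- Let `Δ` be a reflexive polytope; its nonzero lattice points `B` are
the primitive ray generators of the fan `Σ_T` of a unimodular central triangulation `T`
(the unique interior lattice point being the origin `o = 0`).  Given sign distributions
`ε, ε'` with `ε o = ε' o`, and the associated toric `𝔽₂`-divisors
`D = ∑_{ε v = ε o} D_v`, `D' = ∑_{ε' v = ε' o} D_v`, the divisors `D` and `D'` define the
same class in `Pic_{𝔽₂}(ℂΣ_T)` — i.e. their difference lies in the image of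
`N ⊗ 𝔽₂ → ⊕_{v ∈ B} 𝔽₂·D_v`, `n ↦ ∑_v ⟨n, v⟩ D_v` — if and only if there is a group
homomorphism `ξ : M → 𝔽₂` with `ε' v = ε v + ξ (v - o)` for all lattice points `v` of `Δ`. -/
theorem divisor_classes_eq_iff_sign_translate {d : ℕ} (Δ : Set (Fin d → ℝ))
    (hΔ : IsReflexive Δ)
    (B : Finset (Fin d → ℤ))
    (hB : ∀ v : Fin d → ℤ, v ∈ B ↔ ((fun i => (v i : ℝ)) ∈ Δ ∧ v ≠ 0))
    (ε ε' : (Fin d → ℤ) → ZMod 2) (ho : ε 0 = ε' 0)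
    (D D' : ↥B → ZMod 2)
    (hD : ∀ v : ↥B, D v = if ε v.1 = ε 0 then 1 else 0)
    (hD' : ∀ v : ↥B, D' v = if ε' v.1 = ε' 0 then 1 else 0) :
    (D - D') ∈ LinearMap.range
        (Matrix.mulVecLin (Matrix.of fun (v : ↥B) (i : Fin d) => ((v.1 i : ZMod 2))))
      ↔ ∃ ξ : (Fin d → ℤ) →+ ZMod 2, ∀ v : Fin d → ℤ,
          (fun i => (v i : ℝ)) ∈ Δ → ε' v = ε v + ξ (v - 0) :=
  divisor_classes_eq_iff_sign_translate_general Δ B hB ε ε' ho D D' hD hD'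
end

section
/- Let M be a free ℤ-module of finite rank with dual N, and let v ∈ N be a primitive vector. Then for any p ≥ 0, the p-th exterior power Λ^p(v^⊥) of the annihilator sublattice v^⊥ ⊂ M equals the kernel of the contraction map ι_v : Λ^p M → Λ^{p-1} M. -/
set_option synthInstance.maxHeartbeats 1000000
set_option maxHeartbeats 1000000

/-- A dual vector is primitive if it is nonzero and is not an integer multiple `≥ 2` of
another dual vector. -/
def IsPrimitiveDual {M : Type*} [AddCommGroup M] [Module ℤ M]
    (v : Module.Dual ℤ M) : Prop :=
  v ≠ 0 ∧ ∀ (k : ℤ) (w : Module.Dual ℤ M), 2 ≤ k → v ≠ k • w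

/-!
Over `ℤ`, primitivity of `v` provides `e` with `v e = 1`, so the transvection
`π m = m - v m • e` projects `M` onto `v^⊥`. Since `ι_v` is an antiderivation and `e ∧ e = 0`,
the induced algebra map on `ΛM` is `Λπ = id - (e ∧ ·) ∘ ι_v`; it therefore fixes `ker ι_v`,
and it maps `Λ^p M` into the span of wedges of `p` vectors of `v^⊥`. Conversely `ι_v` kills
every wedge of vectors of `v^⊥`.
-/

open ExteriorAlgebra CliffordAlgebra

section ExteriorAlgebra

variable {R M : Type*} [CommRing R] [AddCommGroup M] [Module R M]

theorem ExteriorAlgebra.contractLeft_ιMulti_eq_zero {d : Module.Dual R M} {n : ℕ}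
    {f : Fin n → M} (hf : ∀ i, d (f i) = 0) : contractLeft d (ιMulti R n f) = 0 := by
  induction n with
  | zero => rw [ιMulti_zero_apply, contractLeft_one]
  | succ n ih =>
    rw [ιMulti_succ_apply, contractLeft_ι_mul, ih (f := Matrix.vecTail f) fun i => hf i.succ,
      hf 0, zero_smul, mul_zero, sub_zero]

theorem ExteriorAlgebra.map_transvection_apply (d : Module.Dual R M) (e : M)
    (x : ExteriorAlgebra R M) :
    map (LinearMap.transvection d e) x = x + ι R e * contractLeft d x := by
  induction x using CliffordAlgebra.left_induction with
  | algebraMap r => rw [AlgHom.commutes, contractLeft_algebraMap, mul_zero, add_zero]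
  | add x y hx hy => rw [map_add, hx, hy, map_add, mul_add]; abel
  | ι_mul x m hx =>
    have hee : ι R e * ι R e = 0 := ι_sq_zero e
    have hanti : ι R m * ι R e = -(ι R e * ι R m) :=
      eq_neg_of_add_eq_zero_left (ι_add_mul_swap m e)
    rw [map_mul, map_apply_ι, hx, contractLeft_ι_mul, LinearMap.transvection.apply, map_add,
      map_smul]
    simp only [add_mul, mul_add, mul_sub, smul_mul_assoc, mul_smul_comm, ← mul_assoc, hanti, hee,
      neg_mul, zero_mul, smul_zero]
    abel

theorem ExteriorAlgebra.map_mem_span_ιMulti {N : Type*} [AddCommGroup N] [Module R N]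
    {f : M →ₗ[R] N} {P : N → Prop} (hP : ∀ m, P (f m)) {p : ℕ} {x : ExteriorAlgebra R M}
    (hx : x ∈ Submodule.span R (Set.range (ιMulti R p))) :
    map f x ∈ Submodule.span R {y | ∃ g : Fin p → N, (∀ i, P (g i)) ∧ y = ιMulti R p g} := by
  induction hx using Submodule.span_induction with
  | mem y hy =>
    obtain ⟨g, rfl⟩ := hy
    exact Submodule.subset_span ⟨f ∘ g, fun i => hP (g i), map_apply_ιMulti f g⟩
  | zero => rw [map_zero]; exact Submodule.zero_mem _
  | add y z _ _ hy hz => rw [map_add]; exact Submodule.add_mem _ hy hz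
  | smul c y _ hy => rw [map_smul]; exact Submodule.smul_mem _ c hy

end ExteriorAlgebra

theorem LinearMap.exists_eq_smul_of_forall_dvd {R M : Type*} [CommRing R] [IsDomain R]
    [AddCommGroup M] [Module R M] {f : M →ₗ[R] R} {n : R} (hn : n ≠ 0)
    (hdvd : ∀ m, n ∣ f m) : ∃ g : M →ₗ[R] R, f = n • g := by
  choose g hg using hdvd
  refine ⟨{ toFun := g, map_add' := fun a b => ?_, map_smul' := fun c a => ?_ }, ext hg⟩
  · exact mul_left_cancel₀ hn (by rw [← hg, mul_add, ← hg, ← hg, map_add])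
  · exact mul_left_cancel₀ hn (by
      rw [← hg, RingHom.id_apply, smul_eq_mul, mul_left_comm, ← hg, map_smul, smul_eq_mul])

theorem IsPrimitiveDual.exists_apply_eq_one {M : Type*} [AddCommGroup M] [Module ℤ M]
    {v : Module.Dual ℤ M} (hv : IsPrimitiveDual v) : ∃ e : M, v e = 1 := by
  set n := Submodule.IsPrincipal.generator (LinearMap.range v)
  have hdvd (m : M) : n ∣ v m :=
    (Submodule.IsPrincipal.mem_iff_generator_dvd _).mp (LinearMap.mem_range_self v m)
  obtain ⟨e, he⟩ : n ∈ LinearMap.range v := Submodule.IsPrincipal.generator_mem _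
  have hn : n ≠ 0 := fun h => hv.1 <| LinearMap.ext fun m => by simpa [h] using hdvd m
  obtain ⟨w, hw⟩ := LinearMap.exists_eq_smul_of_forall_dvd hn hdvd
  have hunit : IsUnit n := by
    by_contra hnu
    refine hv.2 n.natAbs (n.sign • w) ?_ ?_
    · have := Int.natAbs_pos.mpr hn
      have := mt Int.isUnit_iff_natAbs_eq.mpr hnu
      omega
    · rw [smul_smul, mul_comm, Int.sign_mul_natAbs, hw]
  exact ⟨n • e, by rw [map_zsmul, he, smul_eq_mul, Int.isUnit_mul_self hunit]⟩

theorem exterior_power_perp_eq_ker_contraction_general {M : Type*} [AddCommGroup M] [Module ℤ M]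
    (v : Module.Dual ℤ M) (hv : IsPrimitiveDual v) (p : ℕ) :
    Submodule.span ℤ {x : ExteriorAlgebra ℤ M |
        ∃ f : Fin p → M, (∀ i, v (f i) = 0) ∧ x = ExteriorAlgebra.ιMulti ℤ p f}
      = Submodule.span ℤ (Set.range (ExteriorAlgebra.ιMulti ℤ p (M := M)))
          ⊓ LinearMap.ker (CliffordAlgebra.contractLeft v) := by
  refine le_antisymm (Submodule.span_le.mpr ?_) ?_
  · rintro _ ⟨f, hf, rfl⟩
    exact ⟨Submodule.subset_span ⟨f, rfl⟩, contractLeft_ιMulti_eq_zero hf⟩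
  rintro x ⟨hx, hker⟩
  obtain ⟨e, he⟩ := hv.exists_apply_eq_one
  let π := LinearMap.transvection v (-e)
  have hπ (m : M) : v (π m) = 0 := by simp [π, LinearMap.transvection.apply, he]
  have hfix : map π x = x := by
    rw [map_transvection_apply, show contractLeft v x = 0 from hker, mul_zero, add_zero]
  rw [← hfix]
  exact map_mem_span_ιMulti (P := fun m => v m = 0) hπ hx

/-- For a free `ℤ`-module `M` of finite rank and a primitive dual vector
`v`, the `p`-th exterior power of the annihilator sublattice `v^⊥ ⊆ M` (realized inside the
exterior algebra as the span of the wedges of `p` vectors killed by `v`) equals the kernel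
of the contraction `ι_v` intersected with `Λ^p M` (the span of all `p`-fold wedges). -/
theorem exterior_power_perp_eq_ker_contraction {M : Type*} [AddCommGroup M] [Module ℤ M]
    [Module.Free ℤ M] [Module.Finite ℤ M]
    (v : Module.Dual ℤ M) (hv : IsPrimitiveDual v) (p : ℕ) :
    Submodule.span ℤ {x : ExteriorAlgebra ℤ M |
        ∃ f : Fin p → M, (∀ i, v (f i) = 0) ∧ x = ExteriorAlgebra.ιMulti ℤ p f}
      = Submodule.span ℤ (Set.range (ExteriorAlgebra.ιMulti ℤ p (M := M)))
          ⊓ LinearMap.ker (CliffordAlgebra.contractLeft v) :=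
  exterior_power_perp_eq_ker_contraction_general v hv p
end

section
/- Let (C_•, ∂) be a chain complex of 𝔽₂-vector spaces (or modules over a ring) with a direct sum decomposition C_k = A_k ⊕ B_k as modules (not necessarily as complexes), with projections Π_A, Π_B. Suppose that the composition Π_B ∘ ∂ restricted to A_k gives an isomorphism A_k → B_{k-1} for every k. Then the complex C_• is acyclic: every cycle in C_• is a boundary. -/
/-- Let `(C_•, ∂)` be a chain complex of modules with a module direct
sum decomposition `C_k = A_k ⊕ B_k` (not necessarily compatible with `∂`; here
`C_k := A_k × B_k`, with `d k : C_{k+1} → C_k` the boundary and `∂² = 0`).  If for every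
`k` the composition `Π_B ∘ ∂ : A_{k+1} → B_k` is an isomorphism, then the complex is
acyclic: every cycle is a boundary. -/
theorem acyclic_of_offdiagonal_iso {R : Type*} [Ring R] (A B : ℤ → Type*)
    [∀ k, AddCommGroup (A k)] [∀ k, Module R (A k)]
    [∀ k, AddCommGroup (B k)] [∀ k, Module R (B k)]
    (d : ∀ k : ℤ, (A (k + 1) × B (k + 1)) →ₗ[R] (A k × B k))
    (hdd : ∀ (k : ℤ) (x : A (k + 1 + 1) × B (k + 1 + 1)), d k (d (k + 1) x) = 0)
    (hiso : ∀ k : ℤ, Function.Bijective (fun a : A (k + 1) => (d k (a, 0)).2)) :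
    ∀ (k : ℤ) (x : A (k + 1) × B (k + 1)), d k x = 0 →
      ∃ y : A (k + 1 + 1) × B (k + 1 + 1), d (k + 1) y = x := by
  intro k x hx
  obtain ⟨a₂, ha₂⟩ := (hiso (k + 1)).2 x.2
  refine ⟨(a₂, 0), ?_⟩
  set z : A (k + 1) × B (k + 1) := x - d (k + 1) (a₂, 0) with hz
  have hz2 : z.2 = 0 := by
    simp only [hz, Prod.snd_sub, ha₂, sub_self]
  have hzd : d k z = 0 := by
    simp only [hz, map_sub, hx, hdd k (a₂, 0), sub_zero]
  have hzpair : z = (z.1, (0 : B (k + 1))) := by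
    rw [← hz2]
  have hz1 : z.1 = 0 := by
    apply (hiso k).1
    show (d k (z.1, 0)).2 = (d k ((0 : A (k + 1)), (0 : B (k + 1)))).2
    rw [← hzpair, hzd]
    have : ((0 : A (k + 1)), (0 : B (k + 1))) = (0 : A (k + 1) × B (k + 1)) := rfl
    rw [this, map_zero]
  have : z = 0 := by rw [hzpair, hz1]; rfl
  have := sub_eq_zero.mp this
  exact this.symm
end
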